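/- arXiv:2410.17682 — 3 statements merged into one kernel-verified Lean document; each statement's English description precedes it below -/
import Mathlib

section
/- Let V and Z be finite-dimensional vector spaces over a field, both of dimension N, and let e : V → Z be a linear isomorphism. For natural numbers n, k, s with n + s ≤ N and k + s ≤ N, define the linear map W : ⋀ⁿ V* ⊗ ⋀ᵏ Z → ⋀ⁿ⁺ˢ V* ⊗ ⋀ᵏ⁺ˢ Z by wedging s times with the element of V* ⊗ Z corresponding to e. If n + k > N - s, then W is not injective. -/
open TensorProduct

/-- The element of `V* ⊗ Z` corresponding to a linear map `e : V → Z`, viewed inside the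
tensor product of exterior algebras `(⋀ V*) ⊗ (⋀ Z)` via `ι ⊗ ι`. -/
noncomputable def coframeElem (K V Z : Type*) [Field K] [AddCommGroup V] [Module K V]
    [AddCommGroup Z] [Module K Z] [Module.Finite K V] [Module.Free K V] (e : V →ₗ[K] Z) :
    ExteriorAlgebra K (Module.Dual K V) ⊗[K] ExteriorAlgebra K Z :=
  TensorProduct.map (ExteriorAlgebra.ι K) (ExteriorAlgebra.ι K)
    ((dualTensorHomEquiv K V Z).symm e)

/-- The map `W_s^{(n,k)} : ⋀ⁿ V* ⊗ ⋀ᵏ Z → (⋀ V*) ⊗ (⋀ Z)`, `X ↦ X ∧ e ∧ ⋯ ∧ e` (`s` times),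
viewed as landing in the full tensor product of exterior algebras (the actual codomain
`⋀ⁿ⁺ˢ V* ⊗ ⋀ᵏ⁺ˢ Z` sits inside it as the range of the inclusion of the bigraded piece). -/
noncomputable def wedgeMap (K V Z : Type*) [Field K] [AddCommGroup V] [Module K V]
    [AddCommGroup Z] [Module K Z] [Module.Finite K V] [Module.Free K V] (e : V →ₗ[K] Z)
    (n k s : ℕ) :
    ((⋀[K]^n (Module.Dual K V)) ⊗[K] (⋀[K]^k Z)) →ₗ[K]
      (ExteriorAlgebra K (Module.Dual K V) ⊗[K] ExteriorAlgebra K Z) :=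
  (LinearMap.mulRight K ((coframeElem K V Z e) ^ s)).comp
    (TensorProduct.map (Submodule.subtype _) (Submodule.subtype _))

/-- The inclusion of the bigraded piece `⋀ⁿ V* ⊗ ⋀ᵏ Z` into `(⋀ V*) ⊗ (⋀ Z)`. -/
noncomputable def gradedIncl (K V Z : Type*) [Field K] [AddCommGroup V] [Module K V]
    [AddCommGroup Z] [Module K Z] (n k : ℕ) :
    ((⋀[K]^n (Module.Dual K V)) ⊗[K] (⋀[K]^k Z)) →ₗ[K]
      (ExteriorAlgebra K (Module.Dual K V) ⊗[K] ExteriorAlgebra K Z) :=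
  TensorProduct.map (Submodule.subtype _) (Submodule.subtype _)

/-!
Choose a basis `b` of `V`; then `e` corresponds to `θ = ∑ᵢ tᵢ` with `tᵢ = bᵢ* ⊗ e bᵢ`, and the
`tᵢ` pairwise commute (both factors anticommute) and square to zero. Let `X = b*_A ⊗ (e b)_C`,
with `A` the first `n` and `C` the last `k` indices. Then `X tᵢ = 0` for `i ∈ A ∪ C`, so
`X θ^s = X θ'^s` where `θ'` is the sum of the `tᵢ` over the indices outside `A ∪ C`. There are
fewer than `s` of those, hence `θ'^s = 0`, while `X ≠ 0`.
-/

open Finset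

theorem Commute.mul_add_pow_eq_mul_pow_of_mul_eq_zero {R : Type*} [Semiring R] {x a b : R}
    (hab : Commute a b) (hxa : x * a = 0) (s : ℕ) : x * (a + b) ^ s = x * b ^ s := by
  induction s with
  | zero => simp
  | succ s ih =>
    rw [pow_succ, ← mul_assoc, ih, mul_add, mul_assoc, ← (hab.pow_right s).eq, ← mul_assoc, hxa,
      zero_mul, zero_add, pow_succ, mul_assoc]

theorem Finset.sum_pow_card_succ_eq_zero {R ι : Type*} [Semiring R] (s : Finset ι) {f : ι → R}
    (hcomm : ∀ i j, Commute (f i) (f j)) (hsq : ∀ i ∈ s, f i ^ 2 = 0) :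
    (∑ i ∈ s, f i) ^ (#s + 1) = 0 := by
  classical
  induction s using Finset.induction_on with
  | empty => simp
  | insert a s ha ih =>
    rw [sum_insert ha, card_insert_of_notMem ha]
    have ha_comm : Commute (f a) (∑ i ∈ s, f i) := Commute.sum_right _ _ _ fun i _ => hcomm a i
    exact ha_comm.add_pow_eq_zero_of_add_le_succ_of_pow_eq_zero (hsq a (mem_insert_self a s))
      (ih fun i hi => hsq i (mem_insert_of_mem hi)) (by omega)

theorem Fin.card_filter_le_and_lt (N n m : ℕ) :
    #{i : Fin N | n ≤ (i : ℕ) ∧ (i : ℕ) < m} ≤ m - n := by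
  rw [← Nat.card_Ico]
  exact card_le_card_of_injOn Fin.val (fun i hi => by simpa using hi) Fin.val_injective.injOn

theorem TensorProduct.tmul_ne_zero {K M P : Type*} [Semifield K] [AddCommMonoid M] [Module K M]
    [AddCommMonoid P] [Module K P] [Module.Projective K M] [Module.Projective K P]
    {x : M} {y : P} (hx : x ≠ 0) (hy : y ≠ 0) : x ⊗ₜ[K] y ≠ 0 := by
  obtain ⟨f, hf⟩ := Module.Projective.exists_dual_eq_one K hx
  obtain ⟨g, hg⟩ := Module.Projective.exists_dual_eq_one K hy
  intro h
  have := congrArg ((TensorProduct.lid K K).toLinearMap ∘ₗ TensorProduct.map f g) h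
  simp [hf, hg] at this

theorem exteriorPower.ιMulti_ne_zero_of_linearIndependent {K E : Type*} [Field K]
    [AddCommGroup E] [Module K E] {n : ℕ} {v : Fin n → E} (hv : LinearIndependent K v) :
    exteriorPower.ιMulti K n v ≠ 0 := by
  simpa [exteriorPower.ιMulti_family] using
    (exteriorPower.ιMulti_family_linearIndependent_field n hv).ne_zero
      (Set.powersetCard.ofFinEmbEquiv (RelEmbedding.refl (· ≤ ·)))

namespace ExteriorAlgebra

variable {R M P : Type*} [CommRing R] [AddCommGroup M] [Module R M] [AddCommGroup P] [Module R P]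

theorem ιMulti_mul_ι_self {n : ℕ} (v : Fin n → M) (i : Fin n) :
    ιMulti R n v * ι R (v i) = 0 := by
  have : ιMulti R n v * ι R (v i) = ιMulti R (n + 1) (Fin.snoc v (v i)) := by
    rw [ιMulti_apply, ιMulti_apply, List.ofFn_succ', List.prod_concat]
    simp
  rw [this]
  exact (ιMulti R (n + 1)).map_eq_zero_of_eq _ (i := i.castSucc) (j := Fin.last n) (by simp)
    (Fin.castSucc_lt_last i).ne

theorem commute_ι_tmul_ι (m m' : M) (p p' : P) :
    Commute (ι R m ⊗ₜ[R] ι R p) (ι R m' ⊗ₜ[R] ι R p') := by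
  simp only [Commute, SemiconjBy, Algebra.TensorProduct.tmul_mul_tmul]
  rw [eq_neg_of_add_eq_zero_left (ι_add_mul_swap m m'),
    eq_neg_of_add_eq_zero_left (ι_add_mul_swap p p'), neg_tmul, tmul_neg, neg_neg]

theorem ι_tmul_ι_sq (m : M) (p : P) : (ι R m ⊗ₜ[R] ι R p) ^ 2 = 0 := by
  rw [sq, Algebra.TensorProduct.tmul_mul_tmul, ι_sq_zero, zero_tmul]

theorem tmul_mul_sum_ι_tmul_ι_pow_eq_zero {I : Type*} [Fintype I] [DecidableEq I]
    (u : I → M) (w : I → P) {x : ExteriorAlgebra R M} {y : ExteriorAlgebra R P} (S : Finset I)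
    (hS : ∀ i ∈ S, x * ι R (u i) = 0 ∨ y * ι R (w i) = 0) {s : ℕ} (hs : #Sᶜ < s) :
    (x ⊗ₜ[R] y) * (∑ i, ι R (u i) ⊗ₜ[R] ι R (w i)) ^ s = 0 := by
  have hcomm : ∀ i j, Commute (ι R (u i) ⊗ₜ[R] ι R (w i)) (ι R (u j) ⊗ₜ[R] ι R (w j)) :=
    fun i j => commute_ι_tmul_ι _ _ _ _
  have hkill : (x ⊗ₜ[R] y) * ∑ i ∈ S, ι R (u i) ⊗ₜ[R] ι R (w i) = 0 := by
    rw [mul_sum]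
    refine sum_eq_zero fun i hi => ?_
    rcases hS i hi with h | h <;> simp [Algebra.TensorProduct.tmul_mul_tmul, h]
  have hsplit : Commute (∑ i ∈ S, ι R (u i) ⊗ₜ[R] ι R (w i))
      (∑ i ∈ Sᶜ, ι R (u i) ⊗ₜ[R] ι R (w i)) :=
    Commute.sum_left _ _ _ fun i _ => Commute.sum_right _ _ _ fun j _ => hcomm i j
  have hnil : (∑ i ∈ Sᶜ, ι R (u i) ⊗ₜ[R] ι R (w i)) ^ s = 0 :=
    pow_eq_zero_of_le hs (Sᶜ.sum_pow_card_succ_eq_zero hcomm fun i _ => ι_tmul_ι_sq _ _)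
  rw [← sum_add_sum_compl S, hsplit.mul_add_pow_eq_mul_pow_of_mul_eq_zero hkill, hnil, mul_zero]

end ExteriorAlgebra

theorem coframeElem_eq_sum_basis {K V Z ι : Type*} [Field K] [AddCommGroup V] [Module K V]
    [AddCommGroup Z] [Module K Z] [Module.Finite K V] [Module.Free K V] [Fintype ι]
    (b : Module.Basis ι K V) (e : V →ₗ[K] Z) :
    coframeElem K V Z e =
      ∑ i, ExteriorAlgebra.ι K (b.coord i) ⊗ₜ[K] ExteriorAlgebra.ι K (e (b i)) := by
  have : (dualTensorHomEquiv K V Z).symm e = ∑ i, b.coord i ⊗ₜ[K] e (b i) := by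
    classical
    rw [LinearEquiv.symm_apply_eq, map_sum]
    refine b.ext fun j => ?_
    simp [Finsupp.single_apply]
  rw [coframeElem, this, map_sum]
  simp only [map_tmul]

theorem wedgeMap_not_injective_of_lt_general (K V Z : Type*) [Field K] [AddCommGroup V] [Module K V]
    [AddCommGroup Z] [Module K Z] [FiniteDimensional K V]
    (N : ℕ) (hV : Module.finrank K V = N)
    (e : V ≃ₗ[K] Z) (n k s : ℕ) (hs : 1 ≤ s) (hn : n + s ≤ N) (hk : k + s ≤ N)
    (h : N - s < n + k) :
    ¬ Function.Injective (wedgeMap K V Z (e : V →ₗ[K] Z) n k s) := by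
  let b := Module.finBasisOfFinrankEq K V hV
  let a : Fin n → Fin N := Fin.castLE (by omega)
  let c : Fin k → Fin N := fun j => Fin.rev (Fin.castLE (by omega) j)
  let x := exteriorPower.ιMulti K n (b.coord ∘ a)
  let y := exteriorPower.ιMulti K k (b.map e ∘ c)
  have hxy : x ⊗ₜ[K] y ≠ 0 := tmul_ne_zero
    (exteriorPower.ιMulti_ne_zero_of_linearIndependent
      ((b.coe_dualBasis ▸ b.dualBasis.linearIndependent).comp a (Fin.castLE_injective _)))
    (exteriorPower.ιMulti_ne_zero_of_linearIndependent
      ((b.map e).linearIndependent.comp c (Fin.rev_injective.comp (Fin.castLE_injective _))))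
  have hWxy : wedgeMap K V Z e n k s (x ⊗ₜ[K] y) = 0 := by
    rw [wedgeMap, LinearMap.comp_apply, map_tmul, LinearMap.mulRight_apply,
      coframeElem_eq_sum_basis b]
    refine ExteriorAlgebra.tmul_mul_sum_ι_tmul_ι_pow_eq_zero _ _
      ({i | (i : ℕ) < n ∨ N - k ≤ i} : Finset (Fin N)) (fun i hi => ?_) ?_
    · rcases (mem_filter.mp hi).2 with hi | hi
      · rw [show i = a ⟨i, hi⟩ from rfl]
        exact .inl (ExteriorAlgebra.ιMulti_mul_ι_self (b.coord ∘ a) _)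
      · rw [show i = c ⟨N - 1 - i, by omega⟩ from Fin.ext (by simp [c]; omega)]
        exact .inr (by simpa [y] using ExteriorAlgebra.ιMulti_mul_ι_self (b.map e ∘ c) _)
    · rw [compl_filter]
      simp only [not_or, not_lt, not_le]
      have := Fin.card_filter_le_and_lt N n (N - k)
      omega
  exact fun hinj => hxy (hinj (hWxy.trans (map_zero _).symm))

theorem wedgeMap_not_injective_of_lt (K V Z : Type*) [Field K] [AddCommGroup V] [Module K V]
    [AddCommGroup Z] [Module K Z] [FiniteDimensional K V] [FiniteDimensional K Z]
    (N : ℕ) (hV : Module.finrank K V = N) (hZ : Module.finrank K Z = N)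
    (e : V ≃ₗ[K] Z) (n k s : ℕ) (hs : 1 ≤ s) (hn : n + s ≤ N) (hk : k + s ≤ N)
    (h : N - s < n + k) :
    ¬ Function.Injective (wedgeMap K V Z (e : V →ₗ[K] Z) n k s) :=
  wedgeMap_not_injective_of_lt_general K V Z N hV e n k s hs hn hk h
end

section
/- Let V and Z be N-dimensional vector spaces over a field and e : V → Z a linear isomorphism. For n, k, s with n + s ≤ N and k + s ≤ N, let W : ⋀ⁿ V* ⊗ ⋀ᵏ Z → ⋀ⁿ⁺ˢ V* ⊗ ⋀ᵏ⁺ˢ Z be the map given by wedging s times with the element of V* ⊗ Z corresponding to e. If n + k < N - s, then W is not surjective. -/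
open TensorProduct

/-! The range of `W` has dimension at most that of its source `⋀ⁿ V* ⊗ ⋀ᵏ Z`, which is
`C(N,n) C(N,k)`, while the bigraded piece `⋀ⁿ⁺ˢ V* ⊗ ⋀ᵏ⁺ˢ Z` has dimension
`C(N,n+s) C(N,k+s)`. Since `C(N,n+s) C(n+s,s) = C(N,n) C(N-n,s)`, comparing the two dimensions
amounts to `C(n+s,s) C(k+s,s) < C(N-k,s) C(N-n,s)`, which holds factorwise because
`n + s < N - k` and `k + s < N - n`. -/

namespace Nat

theorem choose_lt_choose_of_lt {a b s : ℕ} (hs : 0 < s) (hsa : s ≤ a + 1) (hab : a < b) :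
    a.choose s < b.choose s := by
  obtain ⟨t, rfl⟩ : ∃ t, s = t + 1 := ⟨s - 1, by omega⟩
  calc a.choose (t + 1) < (a + 1).choose (t + 1) := by
        rw [choose_succ_succ']
        have := choose_pos (show t ≤ a by omega)
        omega
    _ ≤ b.choose (t + 1) := choose_le_choose _ hab

theorem choose_add_mul_choose (N n s : ℕ) :
    N.choose (n + s) * (n + s).choose s = N.choose n * (N - n).choose s := by
  rw [← choose_symm_add, choose_mul (le_add_right n s), Nat.add_sub_cancel_left]

theorem choose_mul_choose_lt_choose_add_mul_choose_add {N n k s : ℕ} (hs : 0 < s)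
    (h : n + k + s < N) :
    N.choose n * N.choose k < N.choose (n + s) * N.choose (k + s) := by
  have hn : (n + s).choose s < (N - k).choose s := choose_lt_choose_of_lt hs (by omega) (by omega)
  have hk : (k + s).choose s < (N - n).choose s := choose_lt_choose_of_lt hs (by omega) (by omega)
  have hpos : 0 < N.choose n * N.choose k :=
    Nat.mul_pos (choose_pos (by omega)) (choose_pos (by omega))
  refine Nat.lt_of_mul_lt_mul_right (a := (n + s).choose s * (k + s).choose s) ?_
  calc N.choose n * N.choose k * ((n + s).choose s * (k + s).choose s)
      < N.choose n * N.choose k * ((N - k).choose s * (N - n).choose s) :=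
        Nat.mul_lt_mul_of_pos_left (Nat.mul_lt_mul'' hn hk) hpos
    _ = (N.choose n * (N - n).choose s) * (N.choose k * (N - k).choose s) := by ring
    _ = N.choose (n + s) * N.choose (k + s) * ((n + s).choose s * (k + s).choose s) := by
        rw [← choose_add_mul_choose, ← choose_add_mul_choose]
        ring

end Nat

theorem LinearMap.range_ne_range_of_finrank_lt {R M M' E : Type*} [Semiring R]
    [StrongRankCondition R] [AddCommMonoid M] [Module R M] [AddCommMonoid M'] [Module R M']
    [AddCommMonoid E] [Module R E]
    [Module.Finite R M] (f : M →ₗ[R] E) {g : M' →ₗ[R] E} (hg : Function.Injective g)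
    (h : Module.finrank R M < Module.finrank R M') :
    LinearMap.range f ≠ LinearMap.range g := by
  intro heq
  have hle := LinearMap.finrank_range_le f
  rw [heq, LinearMap.finrank_range_of_inj hg] at hle
  omega

theorem gradedIncl_injective (K V Z : Type*) [Field K] [AddCommGroup V] [Module K V]
    [AddCommGroup Z] [Module K Z] (n k : ℕ) :
    Function.Injective (gradedIncl K V Z n k) :=
  TensorProduct.map_injective_of_flat_flat _ _ (Submodule.injective_subtype _)
    (Submodule.injective_subtype _)

theorem wedgeMap_not_surjective_of_lt_general (K V Z : Type*) [Field K] [AddCommGroup V] [Module K V]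
    [AddCommGroup Z] [Module K Z] [FiniteDimensional K V] [FiniteDimensional K Z]
    (N : ℕ) (hV : Module.finrank K V = N) (hZ : Module.finrank K Z = N)
    (e : V ≃ₗ[K] Z) (n k s : ℕ) (hs : 1 ≤ s)
    (h : n + k < N - s) :
    LinearMap.range (wedgeMap K V Z (e : V →ₗ[K] Z) n k s) ≠
      LinearMap.range (gradedIncl K V Z (n + s) (k + s)) := by
  have hV' : Module.finrank K (Module.Dual K V) = N := by rw [Subspace.dual_finrank_eq, hV]
  refine LinearMap.range_ne_range_of_finrank_lt _ (gradedIncl_injective K V Z (n + s) (k + s)) ?_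
  simp only [Module.finrank_tensorProduct, exteriorPower.finrank_eq, hV', hZ]
  exact Nat.choose_mul_choose_lt_choose_add_mul_choose_add hs (by omega)

theorem wedgeMap_not_surjective_of_lt (K V Z : Type*) [Field K] [AddCommGroup V] [Module K V]
    [AddCommGroup Z] [Module K Z] [FiniteDimensional K V] [FiniteDimensional K Z]
    (N : ℕ) (hV : Module.finrank K V = N) (hZ : Module.finrank K Z = N)
    (e : V ≃ₗ[K] Z) (n k s : ℕ) (hs : 1 ≤ s) (hn : n + s ≤ N) (hk : k + s ≤ N)
    (h : n + k < N - s) :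
    LinearMap.range (wedgeMap K V Z (e : V →ₗ[K] Z) n k s) ≠
      LinearMap.range (gradedIncl K V Z (n + s) (k + s)) :=
  wedgeMap_not_surjective_of_lt_general K V Z N hV hZ e n k s hs h
end

section
/- Let V and Z be 4-dimensional vector spaces over a field of characteristic zero, e : V → Z an isomorphism, and V' ⊂ V a 3-dimensional subspace. Then the map W : ⋀² (V')* ⊗ ⋀¹ Z → ⋀³ (V')* ⊗ ⋀² Z given by wedging with e|_{V'} ∈ (V')* ⊗ Z is surjective but not injective, while the corresponding 'bulk' map ⋀² V* ⊗ ⋀¹ Z → ⋀³ V* ⊗ ⋀² Z given by wedging with e is bijective. -/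
open TensorProduct

/-!
Fix a basis `b` of `V` with dual basis `b^i` and put `zᵢ = e bᵢ`. Wedging with `e` sends `x ⊗ y`
to `∑ᵢ (x ∧ b^i) ⊗ (y ∧ zᵢ)`, and every generator `b^{abc} ⊗ (z_p ∧ z_q)` of `⋀³ V* ⊗ ⋀² Z` is
hit. If `p` or `q` is the index `d` missing from `{a, b, c}`, the image of `b^{ab} ⊗ z_d` (after
reordering) has a single surviving term. If `{a, b, c} = {w, p, q}`, the images of `b^{wu} ⊗ z_u`
for the three `u ≠ w` are the pairwise sums of three such generators, and solving for one of them
divides by `2`. On the boundary `Z` is spanned by the `e c_j` and one more vector, so every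
generator of `⋀² Z` has a factor `e c_j` and the single-term case suffices.

Once the image is the whole bigraded piece, counting dimensions settles injectivity:
`C(4,2)·4 = C(4,3)·C(4,2)` in the bulk, while `C(3,2)·4 = 12 > 6 = C(3,3)·C(4,2)` on the boundary.
-/

open ExteriorAlgebra

namespace ExteriorAlgebra

variable {R M : Type*} [CommRing R] [AddCommGroup M] [Module R M]

theorem ι_mul_ι_comm (x y : M) : ι R x * ι R y = -(ι R y * ι R x) :=
  eq_neg_of_add_eq_zero_left (ι_add_mul_swap x y)

theorem ι_mul_ι_mul_ι_self_left (x y : M) : ι R x * ι R y * ι R x = 0 := by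
  rw [ι_mul_ι_comm x y, neg_mul, mul_assoc, ι_sq_zero, mul_zero, neg_zero]

theorem ι_mul_ι_mul_ι_self_right (x y : M) : ι R x * ι R y * ι R y = 0 := by
  rw [mul_assoc, ι_sq_zero, mul_zero]

theorem ι_mul_ι_mul_ι_swap_right (x y z : M) :
    ι R x * ι R y * ι R z = -(ι R x * ι R z * ι R y) := by
  rw [mul_assoc, ι_mul_ι_comm y z, mul_neg, mul_assoc]

theorem ι_mul_ι_mul_ι_rotate (x y z : M) : ι R x * ι R y * ι R z = ι R y * ι R z * ι R x := by
  rw [ι_mul_ι_comm x y, neg_mul, ι_mul_ι_mul_ι_swap_right, neg_neg]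

theorem ιMulti_two_apply (v : Fin 2 → M) : ιMulti R 2 v = ι R (v 0) * ι R (v 1) := by
  simp [ιMulti_succ_apply, Matrix.vecTail]

theorem ιMulti_three_apply (v : Fin 3 → M) :
    ιMulti R 3 v = ι R (v 0) * ι R (v 1) * ι R (v 2) := by
  simp [ιMulti_succ_apply, Matrix.vecTail, mul_assoc]

theorem ι_mem_exteriorPower_one (x : M) : ι R x ∈ ⋀[R]^1 M := by
  rw [exteriorPower, pow_one]
  exact LinearMap.mem_range_self _ x

theorem mul_ι_mem_exteriorPower_succ {n : ℕ} {x : ExteriorAlgebra R M} (hx : x ∈ ⋀[R]^n M)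
    (y : M) : x * ι R y ∈ ⋀[R]^(n + 1) M := by
  rw [exteriorPower, pow_succ]
  exact Submodule.mul_mem_mul hx (LinearMap.mem_range_self _ y)

theorem ι_mul_ι_mem_exteriorPower_two (x y : M) : ι R x * ι R y ∈ ⋀[R]^2 M :=
  mul_ι_mem_exteriorPower_succ (ι_mem_exteriorPower_one x) y

end ExteriorAlgebra

theorem Fin.eq_or_eq_or_eq_of_ne {a b c : Fin 3} (hab : a ≠ b) (hac : a ≠ c) (hbc : b ≠ c)
    (i : Fin 3) : i = a ∨ i = b ∨ i = c := by
  revert a b c i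
  decide

theorem Fin.eq_or_eq_or_eq_or_eq_of_ne {a b c d : Fin 4} (hab : a ≠ b) (hac : a ≠ c)
    (had : a ≠ d) (hbc : b ≠ c) (hbd : b ≠ d) (hcd : c ≠ d) (i : Fin 4) :
    i = a ∨ i = b ∨ i = c ∨ i = d := by
  revert a b c d i
  decide

theorem Fin.exists_ne_ne_ne (a b c : Fin 4) : ∃ d, a ≠ d ∧ b ≠ d ∧ c ≠ d := by
  revert a b c
  decide

theorem LinearMap.injective_iff_finrank_range_eq {K M N : Type*} [Field K] [AddCommGroup M]
    [Module K M] [AddCommGroup N] [Module K N] [FiniteDimensional K M] (f : M →ₗ[K] N) :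
    Function.Injective f ↔ Module.finrank K (LinearMap.range f) = Module.finrank K M := by
  rw [← LinearMap.ker_eq_bot, ← Submodule.finrank_eq_zero, ← f.finrank_range_add_finrank_ker]
  omega

section GradedIncl

variable {K V Z : Type*} [Field K] [AddCommGroup V] [Module K V] [AddCommGroup Z] [Module K Z]

theorem injective_gradedIncl (n k : ℕ) : Function.Injective (gradedIncl K V Z n k) :=
  TensorProduct.map_injective_of_flat_flat _ _ (Submodule.injective_subtype _)
    (Submodule.injective_subtype _)

theorem finrank_exteriorPower_dual_tensor_exteriorPower [FiniteDimensional K V]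
    [FiniteDimensional K Z] (n k : ℕ) :
    Module.finrank K (⋀[K]^n (Module.Dual K V) ⊗[K] ⋀[K]^k Z) =
      (Module.finrank K V).choose n * (Module.finrank K Z).choose k := by
  rw [Module.finrank_tensorProduct, exteriorPower.finrank_eq, exteriorPower.finrank_eq,
    Subspace.dual_finrank_eq]

theorem finrank_range_gradedIncl [FiniteDimensional K V] [FiniteDimensional K Z] (n k : ℕ) :
    Module.finrank K (LinearMap.range (gradedIncl K V Z n k)) =
      (Module.finrank K V).choose n * (Module.finrank K Z).choose k := by
  rw [LinearMap.finrank_range_of_inj (injective_gradedIncl n k),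
    finrank_exteriorPower_dual_tensor_exteriorPower]

theorem range_gradedIncl_le_of_span_eq_top {n k : ℕ} {S : Set (Module.Dual K V)} {T : Set Z}
    (hS : Submodule.span K S = ⊤) (hT : Submodule.span K T = ⊤)
    {W : Submodule K (ExteriorAlgebra K (Module.Dual K V) ⊗[K] ExteriorAlgebra K Z)}
    (h : ∀ u : Fin n → Module.Dual K V, Set.range u ⊆ S → ∀ v : Fin k → Z, Set.range v ⊆ T →
      ιMulti K n u ⊗ₜ ιMulti K k v ∈ W) :
    LinearMap.range (gradedIncl K V Z n k) ≤ W := by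
  rw [gradedIncl, TensorProduct.range_map_eq_span_tmul, Submodule.span_le]
  rintro _ ⟨x, y, rfl⟩
  have hx : (x : ExteriorAlgebra K (Module.Dual K V)) ∈
      Submodule.span K (ιMulti K n '' {u | Set.range u ⊆ S}) := by
    rw [exteriorPower.ιMulti_span_fixedDegree_of_span_eq_top K n _ hS]
    exact x.2
  have hy : (y : ExteriorAlgebra K Z) ∈
      Submodule.span K (ιMulti K k '' {v | Set.range v ⊆ T}) := by
    rw [exteriorPower.ιMulti_span_fixedDegree_of_span_eq_top K k _ hT]
    exact y.2
  have hxy := Submodule.apply_mem_map₂ (TensorProduct.mk K _ _) hx hy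
  rw [Submodule.map₂_span_span] at hxy
  refine Submodule.span_le.mpr ?_ hxy
  rintro _ ⟨_, ⟨u, hu, rfl⟩, _, ⟨v, hv, rfl⟩, rfl⟩
  exact h u hu v hv

theorem range_gradedIncl_three_two_le {I : Type*} [Fintype I] (b : Module.Basis I K V)
    {T : Set Z} (hT : Submodule.span K T = ⊤)
    {W : Submodule K (ExteriorAlgebra K (Module.Dual K V) ⊗[K] ExteriorAlgebra K Z)}
    (h : ∀ a₁ a₂ a₃ : I, a₁ ≠ a₂ → a₁ ≠ a₃ → a₂ ≠ a₃ → ∀ z₁ ∈ T, ∀ z₂ ∈ T,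
      (ι K (b.coord a₁) * ι K (b.coord a₂) * ι K (b.coord a₃)) ⊗ₜ (ι K z₁ * ι K z₂) ∈ W) :
    LinearMap.range (gradedIncl K V Z 3 2) ≤ W := by
  have hS : Submodule.span K (Set.range b.coord) = ⊤ := by
    classical
    rw [← b.coe_dualBasis]
    exact b.dualBasis.span_eq
  refine range_gradedIncl_le_of_span_eq_top hS hT fun u hu v hv => ?_
  obtain ⟨σ, rfl⟩ := Set.range_subset_range_iff_exists_comp.mp hu
  by_cases hσ : Function.Injective σ
  · rw [ιMulti_three_apply, ιMulti_two_apply]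
    exact h _ _ _ (hσ.ne (by decide)) (hσ.ne (by decide)) (hσ.ne (by decide)) _
      (hv ⟨0, rfl⟩) _ (hv ⟨1, rfl⟩)
  · rw [ιMulti_eq_zero_of_not_inj fun h => hσ h.of_comp, zero_tmul]
    exact zero_mem W

end GradedIncl

section WedgeMap

variable {K V Z : Type*} [Field K] [AddCommGroup V] [Module K V] [AddCommGroup Z] [Module K Z]
  [FiniteDimensional K V]

theorem dualTensorHomEquiv_symm_apply_eq_sum {I : Type*} [Fintype I] (b : Module.Basis I K V)
    (e : V →ₗ[K] Z) : (dualTensorHomEquiv K V Z).symm e = ∑ i, b.coord i ⊗ₜ e (b i) := by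
  rw [LinearEquiv.symm_apply_eq]
  refine b.ext fun j => ?_
  rw [map_sum, LinearMap.sum_apply, Fintype.sum_eq_single j fun i hi => ?_]
  · simp [dualTensorHom_apply]
  · simp [dualTensorHom_apply, Finsupp.single_eq_of_ne hi]

theorem coframeElem_eq_sum {I : Type*} [Fintype I] (b : Module.Basis I K V) (e : V →ₗ[K] Z) :
    coframeElem K V Z e = ∑ i, ι K (b.coord i) ⊗ₜ ι K (e (b i)) := by
  rw [coframeElem, dualTensorHomEquiv_symm_apply_eq_sum b e, map_sum]
  rfl

theorem wedgeMap_one_tmul {I : Type*} [Fintype I] (b : Module.Basis I K V) (e : V →ₗ[K] Z)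
    {n k : ℕ} (x : ⋀[K]^n (Module.Dual K V)) (y : ⋀[K]^k Z) :
    wedgeMap K V Z e n k 1 (x ⊗ₜ y) =
      ∑ i, ((x : ExteriorAlgebra K (Module.Dual K V)) * ι K (b.coord i)) ⊗ₜ
        ((y : ExteriorAlgebra K Z) * ι K (e (b i))) := by
  simp [wedgeMap, coframeElem_eq_sum b e, Finset.mul_sum]

theorem range_wedgeMap_one_le (e : V →ₗ[K] Z) (n k : ℕ) :
    LinearMap.range (wedgeMap K V Z e n k 1) ≤
      LinearMap.range (gradedIncl K V Z (n + 1) (k + 1)) := by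
  rintro _ ⟨t, rfl⟩
  induction t using TensorProduct.induction_on with
  | zero => simp
  | add s t hs ht => rw [map_add]; exact add_mem hs ht
  | tmul x y =>
    rw [wedgeMap_one_tmul (Module.finBasis K V)]
    exact Submodule.sum_mem _ fun i _ =>
      ⟨⟨_, mul_ι_mem_exteriorPower_succ x.2 _⟩ ⊗ₜ ⟨_, mul_ι_mem_exteriorPower_succ y.2 _⟩, rfl⟩

theorem injective_wedgeMap_one_iff_of_range_eq [FiniteDimensional K Z] {n k : ℕ}
    (e : V →ₗ[K] Z) (h : LinearMap.range (wedgeMap K V Z e n k 1) =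
      LinearMap.range (gradedIncl K V Z (n + 1) (k + 1))) :
    Function.Injective (wedgeMap K V Z e n k 1) ↔
      (Module.finrank K V).choose n * (Module.finrank K Z).choose k =
        (Module.finrank K V).choose (n + 1) * (Module.finrank K Z).choose (k + 1) := by
  refine (LinearMap.injective_iff_finrank_range_eq (M := ⋀[K]^n (Module.Dual K V) ⊗[K] ⋀[K]^k Z)
    (N := ExteriorAlgebra K (Module.Dual K V) ⊗[K] ExteriorAlgebra K Z) _).trans ?_
  rw [h, finrank_range_gradedIncl, finrank_exteriorPower_dual_tensor_exteriorPower, eq_comm]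

variable {I : Type*} [Fintype I] (b : Module.Basis I K V) (e : V →ₗ[K] Z)

theorem tmul_mem_range_wedgeMap_of_forall_ne {n k : ℕ} {x : ExteriorAlgebra K (Module.Dual K V)}
    (hx : x ∈ ⋀[K]^n (Module.Dual K V)) {y : ExteriorAlgebra K Z} (hy : y ∈ ⋀[K]^k Z) {p : I}
    (h : ∀ i ≠ p, (x * ι K (b.coord i)) ⊗ₜ[K] (y * ι K (e (b i))) = 0) :
    (x * ι K (b.coord p)) ⊗ₜ (y * ι K (e (b p))) ∈ LinearMap.range (wedgeMap K V Z e n k 1) :=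
  ⟨⟨x, hx⟩ ⊗ₜ ⟨y, hy⟩, by rw [wedgeMap_one_tmul b, Fintype.sum_eq_single p h]⟩

theorem triple_tmul_mem_range_wedgeMap_of_mem {k : ℕ} {a₁ a₂ a₃ : I} (h₁₂ : a₁ ≠ a₂)
    (h₁₃ : a₁ ≠ a₃) (h₂₃ : a₂ ≠ a₃) {y : ExteriorAlgebra K Z} (hy : y ∈ ⋀[K]^k Z)
    (hy' : ∀ i, i ≠ a₁ → i ≠ a₂ → i ≠ a₃ → y * ι K (e (b i)) = 0) {p : I}
    (hp : p = a₁ ∨ p = a₂ ∨ p = a₃) :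
    (ι K (b.coord a₁) * ι K (b.coord a₂) * ι K (b.coord a₃)) ⊗ₜ (y * ι K (e (b p))) ∈
      LinearMap.range (wedgeMap K V Z e 2 k 1) := by
  have of_eq_last (c₁ c₂ c₃ : I) (hc : ∀ i, i ≠ c₁ → i ≠ c₂ → i ≠ c₃ → y * ι K (e (b i)) = 0) :
      (ι K (b.coord c₁) * ι K (b.coord c₂) * ι K (b.coord c₃)) ⊗ₜ (y * ι K (e (b c₃))) ∈
        LinearMap.range (wedgeMap K V Z e 2 k 1) := by
    refine tmul_mem_range_wedgeMap_of_forall_ne b e (ι_mul_ι_mem_exteriorPower_two _ _) hy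
      fun i hi₃ => ?_
    by_cases hi₁ : i = c₁
    · rw [hi₁, ι_mul_ι_mul_ι_self_left, zero_tmul]
    by_cases hi₂ : i = c₂
    · rw [hi₂, ι_mul_ι_mul_ι_self_right, zero_tmul]
    rw [hc i hi₁ hi₂ hi₃, tmul_zero]
  rcases hp with rfl | rfl | rfl
  · rw [ι_mul_ι_mul_ι_rotate]
    exact of_eq_last _ _ _ fun i h₂ h₃ h₁ => hy' i h₁ h₂ h₃
  · rw [← ι_mul_ι_mul_ι_rotate (b.coord a₃)]
    exact of_eq_last _ _ _ fun i h₃ h₁ h₂ => hy' i h₁ h₂ h₃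
  · exact of_eq_last _ _ _ hy'

end WedgeMap

section Bulk

variable {K V Z : Type*} [Field K] [AddCommGroup V] [Module K V] [AddCommGroup Z] [Module K Z]
  [FiniteDimensional K V] (b : Module.Basis (Fin 4) K V) (e : V →ₗ[K] Z)

theorem triple_tmul_self_mem_range_wedgeMap [NeZero (2 : K)] {w x y d : Fin 4}
    (hwx : w ≠ x) (hwy : w ≠ y) (hwd : w ≠ d) (hxy : x ≠ y) (hxd : x ≠ d) (hyd : y ≠ d) :
    (ι K (b.coord w) * ι K (b.coord x) * ι K (b.coord y)) ⊗ₜ (ι K (e (b x)) * ι K (e (b y))) ∈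
      LinearMap.range (wedgeMap K V Z e 2 1 1) := by
  let S (u v : Fin 4) : ExteriorAlgebra K (Module.Dual K V) ⊗[K] ExteriorAlgebra K Z :=
    (ι K (b.coord w) * ι K (b.coord u) * ι K (b.coord v)) ⊗ₜ (ι K (e (b u)) * ι K (e (b v)))
  have S_comm (u v : Fin 4) : S u v = S v u := by
    simp only [S]
    rw [ι_mul_ι_mul_ι_swap_right, ι_mul_ι_comm (e (b u)), neg_tmul, tmul_neg, neg_neg]
  let g (u : Fin 4) : ⋀[K]^2 (Module.Dual K V) ⊗[K] ⋀[K]^1 Z :=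
    ⟨_, ι_mul_ι_mem_exteriorPower_two (b.coord w) (b.coord u)⟩ ⊗ₜ
      ⟨_, ι_mem_exteriorPower_one (e (b u))⟩
  have wedgeMap_g {u v v' : Fin 4} (hwu : w ≠ u) (hwv : w ≠ v) (hwv' : w ≠ v') (huv : u ≠ v)
      (huv' : u ≠ v') (hvv' : v ≠ v') : wedgeMap K V Z e 2 1 1 (g u) = S u v + S u v' := by
    rw [wedgeMap_one_tmul b, Fintype.sum_eq_add v v' hvv' fun i ⟨hiv, hiv'⟩ => ?_]
    rcases Fin.eq_or_eq_or_eq_or_eq_of_ne hwu hwv hwv' huv huv' hvv' i with rfl | rfl | hi | hi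
    · simp [ι_mul_ι_mul_ι_self_left]
    · simp
    · exact absurd hi hiv
    · exact absurd hi hiv'
  refine ⟨(2 : K)⁻¹ • (g x + g y - g d), ?_⟩
  rw [map_smul, map_sub, map_add, wedgeMap_g hwx hwy hwd hxy hxd hyd,
    wedgeMap_g hwy hwx hwd hxy.symm hyd hxd, wedgeMap_g hwd hwx hwy hxd.symm hyd.symm hxy,
    S_comm y x, S_comm d x, S_comm d y,
    show S x y + S x d + (S x y + S y d) - (S x d + S y d) = (2 : K) • S x y by module,
    smul_smul, inv_mul_cancel₀ two_ne_zero, one_smul]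

theorem triple_tmul_mem_range_wedgeMap_of_mem_of_mem [NeZero (2 : K)] {a₁ a₂ a₃ d : Fin 4}
    (h₁₂ : a₁ ≠ a₂) (h₁₃ : a₁ ≠ a₃) (h₁d : a₁ ≠ d) (h₂₃ : a₂ ≠ a₃) (h₂d : a₂ ≠ d) (h₃d : a₃ ≠ d)
    {p q : Fin 4} (hp : p = a₁ ∨ p = a₂ ∨ p = a₃) (hq : q = a₁ ∨ q = a₂ ∨ q = a₃) (hpq : p ≠ q) :
    (ι K (b.coord a₁) * ι K (b.coord a₂) * ι K (b.coord a₃)) ⊗ₜ (ι K (e (b p)) * ι K (e (b q))) ∈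
      LinearMap.range (wedgeMap K V Z e 2 1 1) := by
  have mem_of_swap {u v : Fin 4}
      (h : (ι K (b.coord a₁) * ι K (b.coord a₂) * ι K (b.coord a₃)) ⊗ₜ
        (ι K (e (b u)) * ι K (e (b v))) ∈ LinearMap.range (wedgeMap K V Z e 2 1 1)) :
      (ι K (b.coord a₁) * ι K (b.coord a₂) * ι K (b.coord a₃)) ⊗ₜ
        (ι K (e (b v)) * ι K (e (b u))) ∈ LinearMap.range (wedgeMap K V Z e 2 1 1) := by
    rw [ι_mul_ι_comm (e (b v)), tmul_neg]
    exact neg_mem h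
  have h₂₃' := triple_tmul_self_mem_range_wedgeMap b e h₁₂ h₁₃ h₁d h₂₃ h₂d h₃d
  have h₃₁' := triple_tmul_self_mem_range_wedgeMap b e h₂₃ h₁₂.symm h₂d h₁₃.symm h₃d h₁d
  have h₁₂' := triple_tmul_self_mem_range_wedgeMap b e h₁₃.symm h₂₃.symm h₃d h₁₂ h₁d h₂d
  rw [← ι_mul_ι_mul_ι_rotate (b.coord a₁)] at h₃₁'
  rw [ι_mul_ι_mul_ι_rotate (b.coord a₃)] at h₁₂'
  rcases hp with rfl | rfl | rfl <;> rcases hq with rfl | rfl | rfl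
  · exact absurd rfl hpq
  · exact h₁₂'
  · exact mem_of_swap h₃₁'
  · exact mem_of_swap h₁₂'
  · exact absurd rfl hpq
  · exact h₂₃'
  · exact h₃₁'
  · exact mem_of_swap h₂₃'
  · exact absurd rfl hpq

theorem triple_tmul_mem_range_wedgeMap_fin_four [NeZero (2 : K)] {a₁ a₂ a₃ : Fin 4}
    (h₁₂ : a₁ ≠ a₂) (h₁₃ : a₁ ≠ a₃) (h₂₃ : a₂ ≠ a₃) (p q : Fin 4) :
    (ι K (b.coord a₁) * ι K (b.coord a₂) * ι K (b.coord a₃)) ⊗ₜ (ι K (e (b p)) * ι K (e (b q))) ∈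
      LinearMap.range (wedgeMap K V Z e 2 1 1) := by
  obtain ⟨d, h₁d, h₂d, h₃d⟩ := Fin.exists_ne_ne_ne a₁ a₂ a₃
  have cases := Fin.eq_or_eq_or_eq_or_eq_of_ne h₁₂ h₁₃ h₁d h₂₃ h₂d h₃d
  have mem_triple_or_eq (i : Fin 4) : (i = a₁ ∨ i = a₂ ∨ i = a₃) ∨ i = d := by
    have := cases i
    tauto
  have mem_of_eq_d {r : Fin 4} (hr : r = a₁ ∨ r = a₂ ∨ r = a₃) :=
    triple_tmul_mem_range_wedgeMap_of_mem b e h₁₂ h₁₃ h₂₃ (ι_mem_exteriorPower_one (e (b d)))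
      (fun i h₁ h₂ h₃ => by
        obtain rfl : i = d := by rcases cases i with h | h | h | h <;> tauto
        exact ι_sq_zero _) hr
  rcases eq_or_ne p q with rfl | hpq
  · rw [ι_sq_zero, tmul_zero]
    exact zero_mem _
  rcases mem_triple_or_eq p with hp | rfl <;> rcases mem_triple_or_eq q with hq | rfl
  · exact triple_tmul_mem_range_wedgeMap_of_mem_of_mem b e h₁₂ h₁₃ h₁d h₂₃ h₂d h₃d hp hq hpq
  · rw [ι_mul_ι_comm (e (b p)), tmul_neg]
    exact neg_mem (mem_of_eq_d hp)
  · exact mem_of_eq_d hq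
  · exact absurd rfl hpq

end Bulk

section Ranges

variable {K V Z : Type*} [Field K] [AddCommGroup V] [Module K V] [AddCommGroup Z] [Module K Z]
  [FiniteDimensional K V]

theorem range_wedgeMap_eq_of_finrank_eq_four [NeZero (2 : K)] (hV : Module.finrank K V = 4)
    (e : V →ₗ[K] Z) (he : Function.Surjective e) :
    LinearMap.range (wedgeMap K V Z e 2 1 1) = LinearMap.range (gradedIncl K V Z 3 2) := by
  let b := Module.finBasisOfFinrankEq K V hV
  have hT : Submodule.span K (Set.range (e ∘ b)) = ⊤ := by
    rw [Set.range_comp, ← Submodule.map_span, b.span_eq, Submodule.map_top,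
      LinearMap.range_eq_top.mpr he]
  refine le_antisymm (range_wedgeMap_one_le e 2 1) (range_gradedIncl_three_two_le b hT
    fun a₁ a₂ a₃ h₁₂ h₁₃ h₂₃ _ ⟨p, hp⟩ _ ⟨q, hq⟩ => ?_)
  rw [← hp, ← hq]
  exact triple_tmul_mem_range_wedgeMap_fin_four b e h₁₂ h₁₃ h₂₃ p q

theorem range_wedgeMap_eq_of_finrank_eq_three [FiniteDimensional K Z]
    (hV : Module.finrank K V = 3) (hZ : Module.finrank K Z = 4) (e : V →ₗ[K] Z)
    (he : Function.Injective e) :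
    LinearMap.range (wedgeMap K V Z e 2 1 1) = LinearMap.range (gradedIncl K V Z 3 2) := by
  let c := Module.finBasisOfFinrankEq K V hV
  have hc : LinearIndependent K (e ∘ c) :=
    c.linearIndependent.map' e (LinearMap.ker_eq_bot.mpr he)
  obtain ⟨w, -, hw⟩ := SetLike.exists_of_lt (Submodule.lt_top_of_finrank_lt_finrank
    (by rw [finrank_span_eq_card hc, Fintype.card_fin, hZ]; omega))
  have hT : Submodule.span K (insert w (Set.range (e ∘ c))) = ⊤ := by
    rw [← Fin.range_snoc]
    exact (linearIndependent_finSnoc.mpr ⟨hc, hw⟩).span_eq_top_of_card_eq_finrank'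
      (by rw [Fintype.card_fin, hZ])
  refine le_antisymm (range_wedgeMap_one_le e 2 1) (range_gradedIncl_three_two_le c hT
    fun a₁ a₂ a₃ h₁₂ h₁₃ h₂₃ z₁ hz₁ z₂ hz₂ => ?_)
  have cases := Fin.eq_or_eq_or_eq_of_ne h₁₂ h₁₃ h₂₃
  have mem_range (u : Z) (j : Fin 3) :=
    triple_tmul_mem_range_wedgeMap_of_mem c e h₁₂ h₁₃ h₂₃ (ι_mem_exteriorPower_one u)
      (fun i h₁ h₂ h₃ => absurd (cases i) (by tauto)) (cases j)
  rcases hz₂ with rfl | ⟨j, rfl⟩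
  · rcases hz₁ with rfl | ⟨j, rfl⟩
    · rw [ι_sq_zero, tmul_zero]
      exact zero_mem _
    · rw [ι_mul_ι_comm ((e ∘ c) j), tmul_neg]
      exact neg_mem (mem_range _ j)
  · exact mem_range z₁ j

end Ranges

theorem boundary_map_surjective_not_injective_N4 (K V Z : Type*) [Field K] [CharZero K]
    [AddCommGroup V] [Module K V] [AddCommGroup Z] [Module K Z]
    [FiniteDimensional K V] [FiniteDimensional K Z]
    (hV : Module.finrank K V = 4) (hZ : Module.finrank K Z = 4)
    (e : V ≃ₗ[K] Z) (V' : Submodule K V) (hV' : Module.finrank K V' = 3) :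
    (LinearMap.range (wedgeMap K V' Z ((e : V →ₗ[K] Z).comp V'.subtype) 2 1 1) =
        LinearMap.range (gradedIncl K V' Z 3 2) ∧
      ¬ Function.Injective (wedgeMap K V' Z ((e : V →ₗ[K] Z).comp V'.subtype) 2 1 1)) ∧
    (Function.Injective (wedgeMap K V Z (e : V →ₗ[K] Z) 2 1 1) ∧
      LinearMap.range (wedgeMap K V Z (e : V →ₗ[K] Z) 2 1 1) =
        LinearMap.range (gradedIncl K V Z 3 2)) := by
  have boundary_range := range_wedgeMap_eq_of_finrank_eq_three hV' hZ
    ((e : V →ₗ[K] Z).comp V'.subtype) (e.injective.comp V'.injective_subtype)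
  have bulk_range := range_wedgeMap_eq_of_finrank_eq_four hV (e : V →ₗ[K] Z) e.surjective
  refine ⟨⟨boundary_range, ?_⟩, ?_, bulk_range⟩
  · rw [injective_wedgeMap_one_iff_of_range_eq _ boundary_range, hV', hZ]
    decide
  · rw [injective_wedgeMap_one_iff_of_range_eq _ bulk_range, hV, hZ]
    rfl
end
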